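/- For any set system 𝔐 ⊆ 2^S, the two-sided ideal I_q(𝔐) of the free algebra A = R⟨t_s | s ∈ S⟩ does not depend on the chosen total order of S: if I_q^<(𝔐) and I_q^≪(𝔐) denote the ideals defined using two total orders < and ≪ on S, then I_q^<(𝔐) = I_q^≪(𝔐). -/

import Mathlib

/-!
Let `σ_J` be the even-subset companion of `τ_J = τ^{-,<}_J`. Splitting off the least element
`a` of `J` gives `τ_J = σ_{J∖a} - t_a τ_{J∖a}` and `σ_J = t_a σ_{J∖a} - q τ_{J∖a}`, so
`(τ_J, σ_J)` is the last column of the product `T(t_{j_1}) ⋯ T(t_{j_n})` of the transfer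
matrices `T(x) = [[-x, 1], [-q, x]]` taken in increasing order. In any algebra where
`t_r t_s + t_s t_r = 2q` for all `r, s` these matrices pairwise anticommute, so reordering the
product only changes its sign. Both orders impose exactly these relations (for `r = s` via
`t_s² = q`), hence modulo `I_q^<(𝔐)` every `τ^{-,≪}_J` is `±τ^{-,<}_J ≡ 0`.
-/

/-- The `<`-ordered monomial `t^<_J`, for an explicitly given total order. -/
noncomputable def tMonO (R : Type*) [CommRing R] {S : Type*} (lo : LinearOrder S)
    (J : Finset S) : FreeAlgebra R S :=
  letI := lo
  ((J.sort (· ≤ ·)).map (FreeAlgebra.ι R)).prod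

/-- `ℓ^<_J(I) = Σ_ν (α_ν - ν) = Σ_{i ∈ I} #{j ∈ J \ I : j < i}`, for an explicit order. -/
def ellJO {S : Type*} (lo : LinearOrder S) (J I : Finset S) : ℕ :=
  letI := lo
  ∑ i ∈ I, ((J \ I).filter (· < i)).card

/-- `τ^{-,<}_J`, for an explicitly given total order. -/
noncomputable def tauMinusO (R : Type*) [CommRing R] {S : Type*} (lo : LinearOrder S) (q : R)
    (J : Finset S) : FreeAlgebra R S :=
  ∑ I ∈ J.powerset.filter fun I => ¬ 2 ∣ I.card,
    ((-1 : R) ^ ellJO lo J I * (-q) ^ ((I.card - 1) / 2)) • tMonO R lo (J \ I)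

/-- Generators of the ideal `I_q^<(𝔐)`, for an explicitly given total order. -/
def gensO (R : Type*) [CommRing R] {S : Type*} (lo : LinearOrder S) (q : R)
    (M : Set (Finset S)) : Set (FreeAlgebra R S) :=
  (Set.range fun s : S => FreeAlgebra.ι R s ^ 2 - algebraMap R _ q) ∪
  {x | ∃ r s : S, lo.lt s r ∧
      x = FreeAlgebra.ι R r * FreeAlgebra.ι R s + FreeAlgebra.ι R s * FreeAlgebra.ι R r
        - 2 * algebraMap R _ q} ∪
  {x | ∃ J ∈ M, x = tauMinusO R lo q J}

/-- The two-sided ideal `I_q^<(𝔐)`, for an explicitly given total order. -/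
noncomputable def IqO (R : Type*) [CommRing R] {S : Type*} (lo : LinearOrder S) (q : R)
    (M : Set (Finset S)) : TwoSidedIdeal (FreeAlgebra R S) :=
  TwoSidedIdeal.span (gensO R lo q M)

theorem List.Perm.prod_eq_or_eq_neg_prod {M : Type*} [Monoid M] [HasDistribNeg M]
    {l l' : List M} (h : l.Perm l') (hl : ∀ a ∈ l, ∀ b ∈ l, a * b = -(b * a)) :
    l'.prod = l.prod ∨ l'.prod = -l.prod := by
  induction h with
  | nil => exact .inl rfl
  | cons x _ ih =>
    rcases ih fun a ha b hb => hl a (.tail _ ha) b (.tail _ hb) with h | h <;> simp [h]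
  | swap x y l =>
    right
    simp only [List.prod_cons, ← mul_assoc, hl y (by simp) x (by simp), neg_mul, neg_neg]
  | trans h₁ _ ih₁ ih₂ =>
    rcases ih₁ hl with h | h <;>
      rcases ih₂ fun a ha b hb => hl a (h₁.mem_iff.2 ha) b (h₁.mem_iff.2 hb) with h' | h' <;>
      simp [h, h']

section TransferMatrix

variable {A : Type*} [Ring A]

def transferMatrix (c x : A) : Matrix (Fin 2) (Fin 2) A :=
  !![-x, 1; -c, x]

theorem transferMatrix_mul_apply_zero_one (c x : A) (P : Matrix (Fin 2) (Fin 2) A) :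
    (transferMatrix c x * P) 0 1 = P 1 1 - x * P 0 1 := by
  simp [transferMatrix, Matrix.mul_apply, sub_eq_neg_add]

theorem transferMatrix_mul_apply_one_one (c x : A) (P : Matrix (Fin 2) (Fin 2) A) :
    (transferMatrix c x * P) 1 1 = x * P 1 1 - c * P 0 1 := by
  simp [transferMatrix, Matrix.mul_apply, sub_eq_neg_add]

theorem transferMatrix_mul_transferMatrix_anticomm {c x y : A} (hx : Commute c x)
    (hy : Commute c y) (hxy : x * y + y * x = 2 * c) :
    transferMatrix c x * transferMatrix c y = -(transferMatrix c y * transferMatrix c x) := by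
  rw [← add_eq_zero_iff_eq_neg]
  ext i j
  fin_cases i <;> fin_cases j <;> simp [transferMatrix, hx.eq, hy.eq] <;>
    rw [add_add_add_comm, hxy, two_mul] <;> abel

theorem List.Perm.prod_map_transferMatrix_eq_or_eq_neg {ι : Type*} {c : A} {g : ι → A}
    {l l' : List ι} (h : l.Perm l') (hc : ∀ i, Commute c (g i))
    (hg : ∀ i j, g i * g j + g j * g i = 2 * c) :
    (l'.map fun i => transferMatrix c (g i)).prod = (l.map fun i => transferMatrix c (g i)).prod ∨
      (l'.map fun i => transferMatrix c (g i)).prod =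
        -(l.map fun i => transferMatrix c (g i)).prod :=
  (h.map _).prod_eq_or_eq_neg_prod <| by
    simpa using fun i _ j _ => transferMatrix_mul_transferMatrix_anticomm (hc i) (hc j) (hg i j)

end TransferMatrix

theorem Finset.sum_powerset_insert_filter_card {α β : Type*} [DecidableEq α] [AddCommMonoid β]
    {a : α} {s : Finset α} (ha : a ∉ s) (p : ℕ → Prop) [DecidablePred p]
    (f : Finset α → β) :
    ∑ t ∈ (insert a s).powerset.filter (fun t => p t.card), f t =
      ∑ t ∈ s.powerset.filter (fun t => p t.card), f t +
        ∑ t ∈ s.powerset.filter (fun t => p (t.card + 1)), f (insert a t) := by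
  rw [sum_filter, sum_filter, sum_filter, sum_powerset_insert ha]
  congr 1
  refine sum_congr rfl fun t ht => ?_
  rw [card_insert_of_notMem (notMem_mono (mem_powerset.1 ht) ha)]

open Finset

section Combinatorics

variable (R : Type*) [CommRing R] {S : Type*} (lo : LinearOrder S) (q : R)

def sortedList (J : Finset S) : List S :=
  J.sort (· ≤ ·)

theorem sortedList_perm_toList (J : Finset S) : (sortedList lo J).Perm J.toList :=
  sort_perm_toList _ _

variable {lo} {a : S} {K I : Finset S}

theorem sortedList_insert (ha : ∀ b ∈ K, a < b) :
    sortedList lo (insert a K) = a :: sortedList lo K :=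
  sort_insert _ (fun b hb => (ha b hb).le) fun h => lt_irrefl a (ha a h)

theorem tMonO_insert (ha : ∀ b ∈ K, a < b) :
    tMonO R lo (insert a K) = FreeAlgebra.ι R a * tMonO R lo K := by
  rw [tMonO, tMonO, sort_insert _ (fun b hb => (ha b hb).le) fun h => lt_irrefl a (ha a h),
    List.map_cons, List.prod_cons]

theorem ellJO_insert_of_subset (ha : ∀ b ∈ K, a < b) (hI : I ⊆ K) :
    ellJO lo (insert a K) I = ellJO lo K I + I.card := by
  have haK : a ∉ K := fun h => lt_irrefl a (ha a h)
  rw [ellJO, ellJO, card_eq_sum_ones, ← sum_add_distrib]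
  refine sum_congr rfl fun i hi => ?_
  rw [insert_sdiff_of_notMem _ fun h => haK (hI h), filter_insert, if_pos (ha i (hI hi)),
    card_insert_of_notMem fun h => haK (mem_sdiff.1 (mem_filter.1 h).1).1]

theorem ellJO_insert_insert (ha : ∀ b ∈ K, a < b) (hI : I ⊆ K) :
    ellJO lo (insert a K) (insert a I) = ellJO lo K I := by
  have haK : a ∉ K := fun h => lt_irrefl a (ha a h)
  rw [ellJO, ellJO, sum_insert (fun h => haK (hI h)), insert_sdiff_insert,
    sdiff_insert_of_notMem haK,
    filter_false_of_mem fun b hb => not_lt.2 (ha b (mem_sdiff.1 hb).1).le, card_empty, zero_add]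

variable (lo)

noncomputable def tauTermO (J I : Finset S) : FreeAlgebra R S :=
  ((-1 : R) ^ ellJO lo J I * (-q) ^ (I.card / 2)) • tMonO R lo (J \ I)

noncomputable def sigmaO (J : Finset S) : FreeAlgebra R S :=
  ∑ I ∈ J.powerset.filter fun I => 2 ∣ I.card, tauTermO R lo q J I

theorem tauMinusO_eq_sum_tauTermO (J : Finset S) :
    tauMinusO R lo q J =
      ∑ I ∈ J.powerset.filter fun I => ¬ 2 ∣ I.card, tauTermO R lo q J I :=
  sum_congr rfl fun I hI => by
    rw [tauTermO, (by have := (mem_filter.1 hI).2; omega : (I.card - 1) / 2 = I.card / 2)]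

variable {lo}

theorem tauTermO_insert_of_subset (ha : ∀ b ∈ K, a < b) (hI : I ⊆ K) :
    tauTermO R lo q (insert a K) I =
      (-1 : R) ^ I.card • (FreeAlgebra.ι R a * tauTermO R lo q K I) := by
  have haK : a ∉ K := fun h => lt_irrefl a (ha a h)
  rw [tauTermO, tauTermO, ellJO_insert_of_subset ha hI,
    insert_sdiff_of_notMem _ fun h => haK (hI h),
    tMonO_insert R fun b hb => ha b (mem_sdiff.1 hb).1, mul_smul_comm, smul_smul, pow_add]
  congr 1
  ring

theorem tauTermO_insert_insert (ha : ∀ b ∈ K, a < b) (hI : I ⊆ K) :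
    tauTermO R lo q (insert a K) (insert a I) = (-q) ^ (I.card % 2) • tauTermO R lo q K I := by
  have haK : a ∉ K := fun h => lt_irrefl a (ha a h)
  rw [tauTermO, tauTermO, ellJO_insert_insert ha hI, card_insert_of_notMem fun h => haK (hI h),
    insert_sdiff_insert, sdiff_insert_of_notMem haK, smul_smul,
    (by omega : (I.card + 1) / 2 = I.card / 2 + I.card % 2), pow_add]
  congr 1
  ring

theorem tauMinusO_insert (ha : ∀ b ∈ K, a < b) :
    tauMinusO R lo q (insert a K) = sigmaO R lo q K - FreeAlgebra.ι R a * tauMinusO R lo q K := by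
  have haK : a ∉ K := fun h => lt_irrefl a (ha a h)
  rw [tauMinusO_eq_sum_tauTermO, tauMinusO_eq_sum_tauTermO, sigmaO,
    sum_powerset_insert_filter_card haK (fun n => ¬ 2 ∣ n), mul_sum, sub_eq_neg_add,
    ← sum_neg_distrib]
  congr 1
  · refine sum_congr rfl fun I hI => ?_
    obtain ⟨hIK, hodd⟩ := mem_filter.1 hI
    rw [tauTermO_insert_of_subset R q ha (mem_powerset.1 hIK),
      (Nat.odd_iff.2 (by omega)).neg_one_pow, neg_one_smul]
  · refine sum_congr (filter_congr fun I _ => by omega) fun I hI => ?_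
    obtain ⟨hIK, heven⟩ := mem_filter.1 hI
    rw [tauTermO_insert_insert R q ha (mem_powerset.1 hIK), Nat.mod_eq_zero_of_dvd heven,
      pow_zero, one_smul]

theorem sigmaO_insert (ha : ∀ b ∈ K, a < b) :
    sigmaO R lo q (insert a K) =
      FreeAlgebra.ι R a * sigmaO R lo q K - q • tauMinusO R lo q K := by
  have haK : a ∉ K := fun h => lt_irrefl a (ha a h)
  rw [tauMinusO_eq_sum_tauTermO, sigmaO, sigmaO,
    sum_powerset_insert_filter_card haK (fun n => 2 ∣ n), mul_sum, sub_eq_add_neg, ← neg_smul,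
    smul_sum]
  congr 1
  · refine sum_congr rfl fun I hI => ?_
    obtain ⟨hIK, heven⟩ := mem_filter.1 hI
    rw [tauTermO_insert_of_subset R q ha (mem_powerset.1 hIK),
      (Nat.even_iff.2 (by omega)).neg_one_pow, one_smul]
  · refine sum_congr (filter_congr fun I _ => by omega) fun I hI => ?_
    obtain ⟨hIK, hodd⟩ := mem_filter.1 hI
    rw [tauTermO_insert_insert R q ha (mem_powerset.1 hIK), (by omega : I.card % 2 = 1), pow_one]

end Combinatorics

section TransferMatrixProduct

variable {R : Type*} [CommRing R] {S : Type*} {A : Type*} [Ring A] [Algebra R A]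
  (f : FreeAlgebra R S →ₐ[R] A) (q : R)

def transferMatrixProd (lo : LinearOrder S) (J : Finset S) : Matrix (Fin 2) (Fin 2) A :=
  ((sortedList lo J).map fun s => transferMatrix (algebraMap R A q) (f (FreeAlgebra.ι R s))).prod

theorem map_tauMinusO_sigmaO_eq_transferMatrixProd (lo : LinearOrder S) (J : Finset S) :
    f (tauMinusO R lo q J) = transferMatrixProd f q lo J 0 1 ∧
      f (sigmaO R lo q J) = transferMatrixProd f q lo J 1 1 := by
  induction J using Finset.induction_on_min with
  | empty =>
    simp [transferMatrixProd, sortedList, tauMinusO, sigmaO, tauTermO, ellJO, tMonO,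
      filter_singleton]
  | insert a K ha ih =>
    rw [transferMatrixProd, sortedList_insert ha, List.map_cons, List.prod_cons,
      transferMatrix_mul_apply_zero_one, transferMatrix_mul_apply_one_one, ← transferMatrixProd,
      ← ih.1, ← ih.2, tauMinusO_insert R q ha, sigmaO_insert R q ha]
    simp [Algebra.smul_def]

theorem map_tauMinusO_eq_or_eq_neg
    (hf : ∀ r s : S, f (FreeAlgebra.ι R r) * f (FreeAlgebra.ι R s) +
      f (FreeAlgebra.ι R s) * f (FreeAlgebra.ι R r) = 2 * algebraMap R A q)
    (lo lo' : LinearOrder S) (J : Finset S) :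
    f (tauMinusO R lo' q J) = f (tauMinusO R lo q J) ∨
      f (tauMinusO R lo' q J) = -f (tauMinusO R lo q J) := by
  rw [(map_tauMinusO_sigmaO_eq_transferMatrixProd f q lo' J).1,
    (map_tauMinusO_sigmaO_eq_transferMatrixProd f q lo J).1]
  have hperm := (sortedList_perm_toList lo J).trans (sortedList_perm_toList lo' J).symm
  rcases hperm.prod_map_transferMatrix_eq_or_eq_neg (g := fun s => f (FreeAlgebra.ι R s))
    (fun _ => Algebra.commute_algebraMap_left q _) hf with h | h
  · exact .inl (by rw [transferMatrixProd, h]; rfl)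
  · exact .inr (by rw [transferMatrixProd, h]; rfl)

end TransferMatrixProduct

section Ideal

variable {R : Type*} [CommRing R] {S : Type*} (q : R) (M : Set (Finset S))

theorem anticomm_mem_IqO (lo : LinearOrder S) (r s : S) :
    FreeAlgebra.ι R r * FreeAlgebra.ι R s + FreeAlgebra.ι R s * FreeAlgebra.ι R r
      - 2 * algebraMap R _ q ∈ IqO R lo q M := by
  rcases lt_trichotomy s r with h | rfl | h
  · exact TwoSidedIdeal.subset_span (.inl (.inr ⟨r, s, h, rfl⟩))
  · convert (IqO R lo q M).mul_mem_left 2 _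
      (TwoSidedIdeal.subset_span (.inl (.inl ⟨s, rfl⟩))) using 1
    noncomm_ring
  · have hsr : FreeAlgebra.ι R s * FreeAlgebra.ι R r + FreeAlgebra.ι R r * FreeAlgebra.ι R s
        - 2 * algebraMap R _ q ∈ IqO R lo q M :=
      TwoSidedIdeal.subset_span (.inl (.inr ⟨s, r, h, rfl⟩))
    rwa [add_comm] at hsr

theorem IqO_le_IqO (lo lo' : LinearOrder S) : IqO R lo' q M ≤ IqO R lo q M := by
  set I := IqO R lo q M
  let π := I.ringCon.mkₐ R
  have mem_iff : ∀ x, x ∈ I ↔ π x = 0 := fun x => by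
    conv_lhs => rw [← I.ker_ringCon_mk']
    exact TwoSidedIdeal.mem_ker _
  have hπ : ∀ r s : S, π (FreeAlgebra.ι R r) * π (FreeAlgebra.ι R s) +
      π (FreeAlgebra.ι R s) * π (FreeAlgebra.ι R r) = 2 * algebraMap R _ q := fun r s => by
    have := (mem_iff _).1 (anticomm_mem_IqO q M lo r s)
    rwa [map_sub, map_add, map_mul, map_mul, map_mul, map_ofNat, AlgHom.commutes,
      sub_eq_zero] at this
  refine TwoSidedIdeal.span_le.2 ?_
  rintro x ((⟨s, rfl⟩ | ⟨r, s, -, rfl⟩) | ⟨J, hJ, rfl⟩)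
  · exact TwoSidedIdeal.subset_span (.inl (.inl ⟨s, rfl⟩))
  · exact anticomm_mem_IqO q M lo r s
  · have hτ : π (tauMinusO R lo q J) = 0 :=
      (mem_iff _).1 (TwoSidedIdeal.subset_span (.inr ⟨J, hJ, rfl⟩))
    rw [SetLike.mem_coe, mem_iff]
    rcases map_tauMinusO_eq_or_eq_neg π q hπ lo lo' J with h | h <;> simp [h, hτ]

end Ideal

theorem stmt13_general {S : Type*} {R : Type*} [CommRing R] (q : R)
    (M : Set (Finset S)) (lo₁ lo₂ : LinearOrder S) :
    IqO R lo₁ q M = IqO R lo₂ q M :=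
  le_antisymm (IqO_le_IqO q M lo₂ lo₁) (IqO_le_IqO q M lo₁ lo₂)

theorem stmt13 {S : Type*} [Fintype S] {R : Type*} [CommRing R] (q : R)
    (M : Set (Finset S)) (lo₁ lo₂ : LinearOrder S) :
    IqO R lo₁ q M = IqO R lo₂ q M :=
  stmt13_general q M lo₁ lo₂
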